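/- (Bernstein ellipse extrapolation bound) Let R > 1 and E_R be the open Bernstein ellipse with foci ±1 (image of the disk of radius R under the Joukowski map J(ζ) = (ζ+ζ⁻¹)/2). Let z ∈ E_R \ [-1,1] and define α(z) = 1 - ln|J⁻¹(z)|/ln R, where J⁻¹ is the branch of the inverse Joukowski map with 1 < |J⁻¹(ζ)| < R on E_R \ [-1,1]. Then α(z) ∈ (0,1), and there exists C > 0 such that for every ε > 0 and every bounded analytic F on E_R with sup_{E_R}|F| ≤ 1 and sup_{x∈[-1,1]}|F(x)| ≤ ε, one has |F(z)| ≤ C ε^{α(z)}. -/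

import Mathlib

/-- The open Bernstein ellipse `E_R`, the image of `{1 ≤ |ζ| < R}` under the
Joukowski map `J(ζ) = (ζ + ζ⁻¹)/2`. -/
noncomputable def BernsteinEllipse (R : ℝ) : Set ℂ :=
  (fun ζ : ℂ => (ζ + ζ⁻¹) / 2) '' {ζ : ℂ | 1 ≤ ‖ζ‖ ∧ ‖ζ‖ < R}

/-- The exterior branch of the inverse Joukowski map:
`J⁻¹(z) = z + (z-1)√((z+1)/(z-1))`. -/
noncomputable def Jinv (z : ℂ) : ℂ := z + (z - 1) * ((z + 1) / (z - 1)) ^ ((1 : ℂ) / 2)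

/-- The extrapolation exponent `α(z) = 1 - ln|J⁻¹(z)|/ln R`. -/
noncomputable def alphaEll (R : ℝ) (z : ℂ) : ℝ :=
  1 - Real.log ‖Jinv z‖ / Real.log R

/-! Under `z = J(ζ)` the set `E_R \ [-1,1]` corresponds to the annulus `1 < |ζ| < R`, and
`J⁻¹(z)` is the preimage of `z` there. For `1 < R' < R` the function `F ∘ J` is holomorphic on
the closed annulus `1 ≤ |ζ| ≤ R'`, bounded by `ε` on the unit circle (which `J` maps onto
`[-1,1]`) and by `1` on `|ζ| = R'`. Hadamard's three circles theorem, i.e. the three lines theorem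
after `ζ = exp w`, gives `|F(J ζ)| ≤ ε ^ (1 - log |ζ| / log R')`; letting `R' → R` yields the
bound with `C = 1`. -/

open Complex Complex.HadamardThreeLines Set Filter Topology

theorem norm_le_interp_of_mem_closedAnnulus {E : Type*} [NormedAddCommGroup E]
    [NormedSpace ℂ E] {G : ℂ → E} {r₁ r₂ a b : ℝ} (hr₁ : 0 < r₁) (hr : r₁ < r₂)
    (hG : DifferentiableOn ℂ G (norm ⁻¹' Icc r₁ r₂))
    (ha : ∀ ζ : ℂ, ‖ζ‖ = r₁ → ‖G ζ‖ ≤ a) (hb : ∀ ζ : ℂ, ‖ζ‖ = r₂ → ‖G ζ‖ ≤ b)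
    {ζ : ℂ} (hζ : ζ ∈ norm ⁻¹' Icc r₁ r₂) :
    ‖G ζ‖ ≤ a ^ (1 - (Real.log ‖ζ‖ - Real.log r₁) / (Real.log r₂ - Real.log r₁)) *
      b ^ ((Real.log ‖ζ‖ - Real.log r₁) / (Real.log r₂ - Real.log r₁)) := by
  have hlog : Real.log r₁ < Real.log r₂ := Real.log_lt_log hr₁ hr
  have hexp : MapsTo exp (verticalClosedStrip (Real.log r₁) (Real.log r₂))
      (norm ⁻¹' Icc r₁ r₂) := fun w hw => by
    rw [mem_preimage, norm_exp, ← Real.exp_log hr₁, ← Real.exp_log (hr₁.trans hr)]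
    exact ⟨Real.exp_le_exp.2 hw.1, Real.exp_le_exp.2 hw.2⟩
  have hcl : closure (verticalStrip (Real.log r₁) (Real.log r₂)) =
      verticalClosedStrip (Real.log r₁) (Real.log r₂) := by
    rw [verticalStrip, closure_preimage_re, closure_Ioo hlog.ne, verticalClosedStrip]
  have hd : DiffContOnCl ℂ (G ∘ exp) (verticalStrip (Real.log r₁) (Real.log r₂)) := by
    refine DifferentiableOn.diffContOnCl ?_
    rw [hcl]
    exact hG.comp differentiable_exp.differentiableOn hexp
  have hK : IsCompact (norm ⁻¹' Icc r₁ r₂ : Set ℂ) :=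
    (isCompact_closedBall (0 : ℂ) r₂).of_isClosed_subset
      (isClosed_Icc.preimage continuous_norm) fun w hw => mem_closedBall_zero_iff.2 hw.2
  have hB : BddAbove ((norm ∘ G ∘ exp) '' verticalClosedStrip (Real.log r₁) (Real.log r₂)) :=
    (hK.bddAbove_image hG.continuousOn.norm).mono <| by
      rintro _ ⟨w, hw, rfl⟩
      exact ⟨exp w, hexp hw, rfl⟩
  have hζ₀ : ζ ≠ 0 := norm_pos_iff.1 (hr₁.trans_le hζ.1)
  have hlogζ : log ζ ∈ verticalClosedStrip (Real.log r₁) (Real.log r₂) := by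
    rw [verticalClosedStrip, mem_preimage, log_re]
    exact ⟨Real.log_le_log hr₁ hζ.1, Real.log_le_log (hr₁.trans_le hζ.1) hζ.2⟩
  have key := norm_le_interp_of_mem_verticalClosedStrip' hlog hlogζ hd hB
    (fun w hw => ha _ (by rw [norm_exp, hw, Real.exp_log hr₁]))
    (fun w hw => hb _ (by rw [norm_exp, hw, Real.exp_log (hr₁.trans hr)]))
  rwa [Function.comp_apply, exp_log hζ₀, log_re] at key

noncomputable def joukowski (ζ : ℂ) : ℂ := (ζ + ζ⁻¹) / 2

lemma joukowski_mem_bernsteinEllipse {R : ℝ} {ζ : ℂ} (h₁ : 1 ≤ ‖ζ‖) (h₂ : ‖ζ‖ < R) :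
    joukowski ζ ∈ BernsteinEllipse R :=
  ⟨ζ, ⟨h₁, h₂⟩, rfl⟩

lemma joukowski_of_norm_eq_one {ζ : ℂ} (hζ : ‖ζ‖ = 1) : joukowski ζ = (ζ.re : ℂ) := by
  have hinv : ζ⁻¹ = (starRingEnd ℂ) ζ := by
    rw [inv_def, ← Complex.sq_norm, hζ, one_pow, inv_one, ofReal_one, mul_one]
  rw [joukowski, hinv, add_conj]
  push_cast
  ring

lemma eq_of_joukowski_eq {ζ ζ₀ : ℂ} (h : joukowski ζ = joukowski ζ₀) (hζ : 1 < ‖ζ‖)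
    (hζ₀ : 1 ≤ ‖ζ₀‖) : ζ = ζ₀ := by
  have hne : ζ ≠ 0 := norm_pos_iff.1 (one_pos.trans hζ)
  have hne₀ : ζ₀ ≠ 0 := norm_pos_iff.1 (one_pos.trans_le hζ₀)
  have hroots : (ζ - ζ₀) * (ζ - ζ₀⁻¹) = 0 := by
    unfold joukowski at h
    field_simp at h ⊢
    linear_combination h
  rcases mul_eq_zero.1 hroots with h' | h'
  · exact sub_eq_zero.1 h'
  · rw [sub_eq_zero.1 h', norm_inv] at hζ
    exact absurd hζ (not_lt.2 (inv_le_one_of_one_le₀ hζ₀))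

lemma re_cpow_half_pos {x : ℂ} (hx : x ∈ slitPlane) : 0 < (x ^ (1 / 2 : ℂ)).re := by
  obtain ⟨harg, hx₀⟩ := mem_slitPlane_iff_arg.1 hx
  have him : (log x * (1 / 2)).im = x.arg / 2 := by simp [log_im, div_eq_mul_inv]
  have hlo := neg_pi_lt_arg x
  have hhi := (arg_le_pi x).lt_of_ne harg
  rw [cpow_def_of_ne_zero hx₀, exp_re, him]
  exact mul_pos (Real.exp_pos _) (Real.cos_pos_of_mem_Ioo ⟨by linarith, by linarith⟩)

lemma div_mem_slitPlane {z : ℂ} (hz : ¬(z.im = 0 ∧ -1 ≤ z.re ∧ z.re ≤ 1)) :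
    (z + 1) / (z - 1) ∈ slitPlane := by
  rw [mem_slitPlane_iff_not_le_zero]
  intro hle
  have hz₁ : z - 1 ≠ 0 := fun h => hz (by simp [sub_eq_zero.1 h])
  obtain ⟨t, ht, hxt⟩ : ∃ t : ℝ, t ≤ 0 ∧ (z + 1) / (z - 1) = t :=
    ⟨((z + 1) / (z - 1)).re, by simpa using (le_def.1 hle).1,
      ext rfl (by simpa using (le_def.1 hle).2)⟩
  have hzt : z = ((t + 1) / (t - 1) : ℝ) := by
    rw [div_eq_iff hz₁] at hxt
    have : (t : ℂ) - 1 ≠ 0 := by exact_mod_cast (by linarith : t - 1 ≠ 0)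
    push_cast
    field_simp
    linear_combination -hxt
  refine hz ⟨by rw [hzt, ofReal_im], ?_⟩
  rw [hzt, ofReal_re, le_div_iff_of_neg (by linarith), div_le_one_of_neg (by linarith)]
  constructor <;> linarith

/-- The other root of `J(ζ) = z` is `(z - 1)(w - 1)²/2`, and `0 < Re w` makes it the smaller
one. -/
lemma joukowski_root_of_sq {z w : ℂ} (hz : z ≠ 1) (hw : (z - 1) * w ^ 2 = z + 1)
    (hre : 0 < w.re) :
    joukowski ((z - 1) * (w + 1) ^ 2 / 2) = z ∧ 1 < ‖(z - 1) * (w + 1) ^ 2 / 2‖ := by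
  set ζ := (z - 1) * (w + 1) ^ 2 / 2
  set ζ' := (z - 1) * (w - 1) ^ 2 / 2
  have hprod : ζ * ζ' = 1 := by linear_combination (((z - 1) * w ^ 2 - z + 3) / 4) * hw
  have hlt : ‖ζ'‖ < ‖ζ‖ := by
    have hw' : ‖w - 1‖ < ‖w + 1‖ := by
      rw [← sq_lt_sq₀ (norm_nonneg _) (norm_nonneg _), Complex.sq_norm, Complex.sq_norm,
        normSq_apply, normSq_apply]
      simp only [add_re, add_im, sub_re, sub_im, one_re, one_im]
      nlinarith
    simp only [ζ, ζ', norm_div, norm_mul, norm_pow]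
    have : 0 < ‖z - 1‖ := norm_pos_iff.2 (sub_ne_zero.2 hz)
    gcongr
    norm_num
  have hone : ‖ζ‖ * ‖ζ'‖ = 1 := by rw [← norm_mul, hprod, norm_one]
  refine ⟨?_, by nlinarith [norm_nonneg ζ']⟩
  rw [joukowski, (eq_inv_of_mul_eq_one_right hprod).symm]
  linear_combination (1 / 2 : ℂ) * hw

lemma joukowski_Jinv {z : ℂ} (hz : ¬(z.im = 0 ∧ -1 ≤ z.re ∧ z.re ≤ 1)) :
    joukowski (Jinv z) = z ∧ 1 < ‖Jinv z‖ := by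
  have hz₁ : z ≠ 1 := fun h => hz (by simp [h])
  set w := ((z + 1) / (z - 1)) ^ (1 / 2 : ℂ)
  have hw : (z - 1) * w ^ 2 = z + 1 := by
    have : w ^ 2 = (z + 1) / (z - 1) := by
      have := cpow_nat_inv_pow ((z + 1) / (z - 1)) two_ne_zero
      rwa [Nat.cast_ofNat, inv_eq_one_div] at this
    rw [this, mul_div_cancel₀ _ (sub_ne_zero.2 hz₁)]
  have hJ : Jinv z = (z - 1) * (w + 1) ^ 2 / 2 := by
    rw [Jinv]
    linear_combination (-1 / 2 : ℂ) * hw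
  rw [hJ]
  exact joukowski_root_of_sq hz₁ hw (re_cpow_half_pos (div_mem_slitPlane hz))

lemma norm_Jinv_lt {R : ℝ} {z : ℂ} (hzE : z ∈ BernsteinEllipse R)
    (hz : ¬(z.im = 0 ∧ -1 ≤ z.re ∧ z.re ≤ 1)) : ‖Jinv z‖ < R := by
  obtain ⟨ζ₀, ⟨h₁, h₂⟩, rfl⟩ := hzE
  obtain ⟨hJ, hgt⟩ := joukowski_Jinv hz
  rwa [eq_of_joukowski_eq hJ hgt h₁]

section Extrapolation

variable {R ε : ℝ} {F : ℂ → ℂ}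

lemma norm_comp_joukowski_le_of_lt {R' : ℝ} (hR' : 1 < R') (hR'R : R' < R)
    (hFd : DifferentiableOn ℂ F (BernsteinEllipse R))
    (hF1 : ∀ w ∈ BernsteinEllipse R, ‖F w‖ ≤ 1)
    (hFε : ∀ x : ℝ, -1 ≤ x → x ≤ 1 → ‖F (x : ℂ)‖ ≤ ε) {ζ : ℂ} (h₁ : 1 ≤ ‖ζ‖) (h₂ : ‖ζ‖ ≤ R') :
    ‖F (joukowski ζ)‖ ≤ ε ^ (1 - Real.log ‖ζ‖ / Real.log R') := by
  have hmaps : MapsTo joukowski (norm ⁻¹' Icc 1 R') (BernsteinEllipse R) :=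
    fun ξ hξ => joukowski_mem_bernsteinEllipse hξ.1 (hξ.2.trans_lt hR'R)
  have hJd : DifferentiableOn ℂ joukowski (norm ⁻¹' Icc 1 R') := fun ξ hξ => by
    have : ξ ≠ 0 := norm_pos_iff.1 (one_pos.trans_le hξ.1)
    unfold joukowski
    fun_prop (disch := assumption)
  have hcircle : ∀ ξ : ℂ, ‖ξ‖ = 1 → ‖(F ∘ joukowski) ξ‖ ≤ ε := fun ξ hξ => by
    have hre := abs_le.1 ((abs_re_le_norm ξ).trans_eq hξ)
    rw [Function.comp_apply, joukowski_of_norm_eq_one hξ]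
    exact hFε _ hre.1 hre.2
  have key := norm_le_interp_of_mem_closedAnnulus one_pos hR' (hFd.comp hJd hmaps) hcircle
    (fun ξ hξ => hF1 _ (hmaps (by simp [hξ, hR'.le]))) (show ζ ∈ norm ⁻¹' Icc 1 R' from ⟨h₁, h₂⟩)
  simpa only [Function.comp_apply, Real.log_one, sub_zero, Real.one_rpow, mul_one] using key

lemma norm_comp_joukowski_le (hε : 0 < ε)
    (hFd : DifferentiableOn ℂ F (BernsteinEllipse R))
    (hF1 : ∀ w ∈ BernsteinEllipse R, ‖F w‖ ≤ 1)
    (hFε : ∀ x : ℝ, -1 ≤ x → x ≤ 1 → ‖F (x : ℂ)‖ ≤ ε) {ζ : ℂ} (h₁ : 1 ≤ ‖ζ‖) (h₂ : ‖ζ‖ < R) :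
    ‖F (joukowski ζ)‖ ≤ ε ^ (1 - Real.log ‖ζ‖ / Real.log R) := by
  have hR : 1 < R := h₁.trans_lt h₂
  have hcont : ContinuousAt (fun R' => ε ^ (1 - Real.log ‖ζ‖ / Real.log R')) R :=
    (Real.continuousAt_const_rpow hε.ne').comp <| continuousAt_const.sub <|
      continuousAt_const.div (Real.continuousAt_log (one_pos.trans hR).ne') (Real.log_pos hR).ne'
  refine ge_of_tendsto (hcont.tendsto.mono_left (nhdsWithin_le_nhds (s := Iio R))) ?_
  filter_upwards [Ioo_mem_nhdsLT (max_lt hR h₂)] with R' hR'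
  exact norm_comp_joukowski_le_of_lt ((le_max_left _ _).trans_lt hR'.1) hR'.2 hFd hF1 hFε h₁
    ((le_max_right _ _).trans hR'.1.le)

end Extrapolation

lemma alphaEll_mem_Ioo {R : ℝ} {z : ℂ} (h₁ : 1 < ‖Jinv z‖) (h₂ : ‖Jinv z‖ < R) :
    alphaEll R z ∈ Ioo 0 1 := by
  have hlog : 0 < Real.log ‖Jinv z‖ := Real.log_pos h₁
  have hlt : Real.log ‖Jinv z‖ < Real.log R := Real.log_lt_log (by linarith) h₂
  have hratio : Real.log ‖Jinv z‖ / Real.log R ∈ Ioo 0 1 :=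
    ⟨div_pos hlog (hlog.trans hlt), (div_lt_one (hlog.trans hlt)).2 hlt⟩
  exact ⟨sub_pos.2 hratio.2, sub_lt_self _ hratio.1⟩

theorem stmt19_general (R : ℝ) (z : ℂ) (hz : z ∈ BernsteinEllipse R)
    (hz2 : ¬(z.im = 0 ∧ -1 ≤ z.re ∧ z.re ≤ 1)) :
    (0 < alphaEll R z ∧ alphaEll R z < 1) ∧
    ∃ C : ℝ, 0 < C ∧ ∀ ε : ℝ, 0 < ε → ∀ F : ℂ → ℂ,
      DifferentiableOn ℂ F (BernsteinEllipse R) →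
      (∀ w ∈ BernsteinEllipse R, ‖F w‖ ≤ 1) →
      (∀ x : ℝ, -1 ≤ x → x ≤ 1 → ‖F (x : ℂ)‖ ≤ ε) →
      ‖F z‖ ≤ C * ε ^ alphaEll R z := by
  obtain ⟨hJz, hgt⟩ := joukowski_Jinv hz2
  have hlt := norm_Jinv_lt hz hz2
  refine ⟨alphaEll_mem_Ioo hgt hlt, 1, one_pos, fun ε hε F hFd hF1 hFε => ?_⟩
  have key := norm_comp_joukowski_le hε hFd hF1 hFε hgt.le hlt
  rw [hJz] at key
  rwa [one_mul]

/-- Bernstein ellipse extrapolation bound: for `z ∈ E_R \ [-1,1]`,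
`α(z) ∈ (0,1)`, and any `F` analytic and bounded by `1` on `E_R` with `|F| ≤ ε`
on `[-1,1]` satisfies `|F(z)| ≤ C ε^{α(z)}` with `C` independent of `ε, F`. -/
theorem stmt19 (R : ℝ) (hR : 1 < R) (z : ℂ) (hz : z ∈ BernsteinEllipse R)
    (hz2 : ¬(z.im = 0 ∧ -1 ≤ z.re ∧ z.re ≤ 1)) :
    (0 < alphaEll R z ∧ alphaEll R z < 1) ∧
    ∃ C : ℝ, 0 < C ∧ ∀ ε : ℝ, 0 < ε → ∀ F : ℂ → ℂ,
      DifferentiableOn ℂ F (BernsteinEllipse R) →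
      (∀ w ∈ BernsteinEllipse R, ‖F w‖ ≤ 1) →
      (∀ x : ℝ, -1 ≤ x → x ≤ 1 → ‖F (x : ℂ)‖ ≤ ε) →
      ‖F z‖ ≤ C * ε ^ alphaEll R z :=
  stmt19_general R z hz hz2
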